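/- In a ψ-mixing system, for ε < 0.1, A ∈ A_ε, and any integer 1 ≤ k < 1/ε, the escape rate satisfies the lower bound ρ_A ≥ -log[1 - k r_A μ(A)(1 - ε - kε(1+ψ_1))(1 - ψ_{ℓ_A})] / ((k+1) r_A). -/

import Mathlib

open MeasureTheory Filter Topology

noncomputable def hitTime {X : Type*} (T : X → X) (A : Set X) (x : X) : ℕ∞ :=
  sInf ((↑) '' {k : ℕ | 1 ≤ k ∧ T^[k] x ∈ A})

noncomputable def sweep {X : Type*} [MeasurableSpace X] (μ : Measure X) (T : X → X)
    (A : Set X) (k : ℕ) : ℝ :=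
  (μ (⋂ i ∈ Finset.range k, T^[i] ⁻¹' Aᶜ)).toReal

/-!
Write `r = nA + ℓ` and let `V` be the set of points that visit `A` within `k r` steps. By
Bonferroni, `μ V ≥ k r μ(A) (1 - ε - k ε (1 + ψ 1))`: returns to `A` after at most `nA` steps are
controlled by the short-return hypothesis, later ones by mixing. Avoiding `A` up to time `n` is a
`𝔅 (n + nA)`-event, so mixing across the gap `ℓ` gives, for the sweep-out sequence `s`,
`s (n + (k + 1) r) ≤ s n (1 - μ V (1 - ψ ℓ))`. Hence `s` decays geometrically along multiples of
`(k + 1) r`, which bounds its exponential rate from below.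
-/

open Finset

theorem Finset.le_ciSup₂_of_mem {ι α : Type*} [ConditionallyCompleteLattice α] {s : Finset ι}
    (f : ι → α) {i : ι} (hi : i ∈ s) : f i ≤ ⨆ j ∈ s, f j :=
  le_ciSup₂ (f := fun j _ ↦ f j) ((s.finite_toSet.image f).bddAbove.mono <| by
    simp only [Set.iUnion_subset_iff, Set.range_subset_iff]
    exact fun j hj ↦ ⟨j, hj, rfl⟩) i hi

theorem sum_range_le_add_mul {f : ℕ → ℝ} {n j : ℕ} {a b : ℝ} (ha : 0 ≤ a) (hb : 0 ≤ b)
    (hshort : ∀ d < n, n * f d ≤ a) (hlong : ∀ d, n ≤ d → f d ≤ b) :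
    ∑ d ∈ range j, f d ≤ a + j * b := by
  have hf : ∀ d, f d ≤ (if d < n then a / n else 0) + b := by
    intro d
    split_ifs with hd
    · have hn : (0 : ℝ) < n := by exact_mod_cast (Nat.zero_le d).trans_lt hd
      have : f d ≤ a / n := by rw [le_div_iff₀' hn]; exact hshort d hd
      linarith
    · linarith [hlong d (not_lt.mp hd)]
  have hcard : #((range j).filter (· < n)) ≤ n :=
    (card_le_card fun d hd ↦ mem_range.mpr (mem_filter.mp hd).2).trans (card_range n).le
  have hshort_sum : ∑ d ∈ range j, (if d < n then a / n else 0) ≤ a := calc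
    ∑ d ∈ range j, (if d < n then a / n else 0) = #((range j).filter (· < n)) * (a / n) := by
      rw [← sum_filter, sum_const, nsmul_eq_mul]
    _ ≤ n * (a / n) := by gcongr
    _ ≤ a := by
      rcases n.eq_zero_or_pos with rfl | hn
      · simpa using ha
      · rw [mul_div_cancel₀ _ (by positivity)]
  calc ∑ d ∈ range j, f d ≤ ∑ d ∈ range j, ((if d < n then a / n else 0) + b) :=
        sum_le_sum fun d _ ↦ hf d
    _ ≤ a + j * b := by
      rw [sum_add_distrib, sum_const, card_range, nsmul_eq_mul]
      linarith

section Bonferroni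

variable {X : Type*} [MeasurableSpace X] (μ : Measure X) [IsFiniteMeasure μ]

theorem sum_measureReal_sub_sum_inter_le_measureReal_biUnion (C : ℕ → Set X)
    (hC : ∀ i, MeasurableSet (C i)) (N : ℕ) :
    ∑ i ∈ range N, μ.real (C i) - ∑ j ∈ range N, ∑ i ∈ range j, μ.real (C i ∩ C j)
      ≤ μ.real (⋃ i ∈ range N, C i) := by
  induction N with
  | zero => simp
  | succ N ih =>
    have hunion : ⋃ i ∈ range (N + 1), C i = (⋃ i ∈ range N, C i) ∪ C N := by
      rw [range_add_one, set_biUnion_insert, Set.union_comm]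
    have hinter : μ.real ((⋃ i ∈ range N, C i) ∩ C N) ≤ ∑ i ∈ range N, μ.real (C i ∩ C N) := by
      rw [Set.iUnion₂_inter]
      exact measureReal_biUnion_finset_le _ _
    have := measureReal_union_add_inter (s := ⋃ i ∈ range N, C i) (hC N) (measure_ne_top μ _)
    rw [hunion, sum_range_succ, sum_range_succ (fun j ↦ ∑ i ∈ range j, μ.real (C i ∩ C j))]
    linarith

end Bonferroni

theorem le_pow_of_add_le_mul {s : ℕ → ℝ} {q : ℝ} {K : ℕ} (hq : 0 ≤ q) (h0 : s 0 ≤ 1)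
    (hstep : ∀ n, s (n + K) ≤ s n * q) (j : ℕ) : s (j * K) ≤ q ^ j := by
  induction j with
  | zero => simpa using h0
  | succ j ih => calc
    s ((j + 1) * K) = s (j * K + K) := by rw [add_one_mul]
    _ ≤ s (j * K) * q := hstep _
    _ ≤ q ^ j * q := by gcongr
    _ = q ^ (j + 1) := (pow_succ q j).symm

section EscapeRate

variable {s : ℕ → ℝ} {ρ : ℝ}

theorem nonneg_of_tendsto_neg_log_div (hs0 : ∀ n, 0 < s n) (hs1 : ∀ n, s n ≤ 1)
    (hρ : Tendsto (fun n : ℕ ↦ -Real.log (s n) / n) atTop (𝓝 ρ)) : 0 ≤ ρ :=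
  ge_of_tendsto' hρ fun n ↦
    div_nonneg (neg_nonneg.mpr (Real.log_nonpos (hs0 n).le (hs1 n))) n.cast_nonneg

theorem neg_log_div_le_of_tendsto_of_le_pow {c : ℝ} {K : ℕ} (hK : 0 < K) (hs : ∀ n, 0 < s n)
    (hρ : Tendsto (fun n : ℕ ↦ -Real.log (s n) / n) atTop (𝓝 ρ))
    (hdecay : ∀ j, s (j * K) ≤ c ^ j) : -Real.log c / K ≤ ρ := by
  have hsub : Tendsto (fun j : ℕ ↦ j * K) atTop atTop :=
    tendsto_id.atTop_mul_const' hK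
  refine ge_of_tendsto (hρ.comp hsub) ?_
  filter_upwards [eventually_gt_atTop 0] with j hj
  have hlog : Real.log (s (j * K)) ≤ j * Real.log c := by
    rw [← Real.log_pow]
    exact Real.log_le_log (hs _) (hdecay j)
  have hj' : (0 : ℝ) < j := by exact_mod_cast hj
  have hK' : (0 : ℝ) < K := by exact_mod_cast hK
  simp only [Function.comp_apply, Nat.cast_mul]
  rw [div_le_div_iff₀ hK' (mul_pos hj' hK')]
  linarith [mul_le_mul_of_nonneg_right hlog hK'.le]

end EscapeRate

section Filtration

variable {X : Type*} {T : X → X} {𝔅 : ℕ → MeasurableSpace X}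

theorem measurableSet_preimage_iterate_of_filtration
    (h𝔅T : ∀ n (S : Set X), MeasurableSet[𝔅 n] S → MeasurableSet[𝔅 (n + 1)] (T ⁻¹' S))
    {n : ℕ} {S : Set X} (hS : MeasurableSet[𝔅 n] S) (i : ℕ) :
    MeasurableSet[𝔅 (n + i)] (T^[i] ⁻¹' S) := by
  induction i with
  | zero => simpa using hS
  | succ i ih =>
    rw [Function.iterate_succ, Set.preimage_comp]
    exact h𝔅T _ _ ih

theorem measurableSet_biUnion_preimage_iterate_of_filtration (h𝔅mono : Monotone 𝔅)
    (h𝔅T : ∀ n (S : Set X), MeasurableSet[𝔅 n] S → MeasurableSet[𝔅 (n + 1)] (T ⁻¹' S))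
    {n : ℕ} {S : Set X} (hS : MeasurableSet[𝔅 n] S) (N : ℕ) :
    MeasurableSet[𝔅 (n + N)] (⋃ i ∈ range N, T^[i] ⁻¹' S) :=
  Finset.measurableSet_biUnion _ fun i hi ↦
    h𝔅mono (by have := mem_range.mp hi; omega) _
      (measurableSet_preimage_iterate_of_filtration h𝔅T hS i)

theorem measurableSet_biInter_preimage_iterate_compl_of_filtration (h𝔅mono : Monotone 𝔅)
    (h𝔅T : ∀ n (S : Set X), MeasurableSet[𝔅 n] S → MeasurableSet[𝔅 (n + 1)] (T ⁻¹' S))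
    {n : ℕ} {S : Set X} (hS : MeasurableSet[𝔅 n] S) (N : ℕ) :
    MeasurableSet[𝔅 (n + N)] (⋂ i ∈ range N, T^[i] ⁻¹' Sᶜ) :=
  Finset.measurableSet_biInter _ fun i hi ↦
    h𝔅mono (by have := mem_range.mp hi; omega) _
      (measurableSet_preimage_iterate_of_filtration h𝔅T hS.compl i)

end Filtration

section Mixing

variable {X : Type*} [MeasurableSpace X] {μ : Measure X} {T : X → X} {𝔅 : ℕ → MeasurableSpace X}
  {ψ : ℕ → ℝ} {A : Set X}

theorem measureReal_inter_preimage_iterate_le_of_mixing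
    (hmix : ∀ (n m k : ℕ) (S B : Set X), MeasurableSet[𝔅 n] S → MeasurableSet[𝔅 m] B →
      |μ.real (S ∩ T^[k + n] ⁻¹' B) - μ.real S * μ.real B| ≤ ψ k * μ.real S * μ.real B)
    {n m : ℕ} {S B : Set X} (hS : MeasurableSet[𝔅 n] S) (hB : MeasurableSet[𝔅 m] B) (k : ℕ) :
    μ.real (S ∩ T^[k + n] ⁻¹' B) ≤ (1 + ψ k) * (μ.real S * μ.real B) := by
  linarith [(abs_le.mp (hmix n m k S B hS hB)).2]

theorem measureReal_inter_preimage_iterate_ge_of_mixing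
    (hmix : ∀ (n m k : ℕ) (S B : Set X), MeasurableSet[𝔅 n] S → MeasurableSet[𝔅 m] B →
      |μ.real (S ∩ T^[k + n] ⁻¹' B) - μ.real S * μ.real B| ≤ ψ k * μ.real S * μ.real B)
    {n m : ℕ} {S B : Set X} (hS : MeasurableSet[𝔅 n] S) (hB : MeasurableSet[𝔅 m] B) (k : ℕ) :
    (1 - ψ k) * (μ.real S * μ.real B) ≤ μ.real (S ∩ T^[k + n] ⁻¹' B) := by
  linarith [(abs_le.mp (hmix n m k S B hS hB)).1]

theorem measureReal_preimage_iterate_inter_preimage_iterate (hT : MeasurePreserving T μ μ)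
    (hA : MeasurableSet A) {i j : ℕ} (hij : i ≤ j) :
    μ.real (T^[i] ⁻¹' A ∩ T^[j] ⁻¹' A) = μ.real (A ∩ T^[j - i] ⁻¹' A) := by
  obtain ⟨d, rfl⟩ := Nat.exists_eq_add_of_le hij
  rw [Nat.add_sub_cancel_left, add_comm, Function.iterate_add, Set.preimage_comp,
    ← Set.preimage_inter, (hT.iterate i).measureReal_preimage
      (hA.inter ((hT.iterate d).measurable hA)).nullMeasurableSet]

end Mixing

section Visits

variable {X : Type*} [m0 : MeasurableSpace X] {μ : Measure X} [IsFiniteMeasure μ] {T : X → X}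
  {A : Set X}

theorem measureReal_biUnion_preimage_iterate_ge (hT : MeasurePreserving T μ μ)
    (hA : MeasurableSet A) {n : ℕ} {a b : ℝ} (ha : 0 ≤ a) (hb : 0 ≤ b)
    (hshort : ∀ d, 1 ≤ d → d ≤ n → n * μ.real (A ∩ T^[d] ⁻¹' A) ≤ a)
    (hlong : ∀ d, n < d → μ.real (A ∩ T^[d] ⁻¹' A) ≤ b) (N : ℕ) :
    N * μ.real A - N * (a + N * b) ≤ μ.real (⋃ i ∈ range N, T^[i] ⁻¹' A) := by
  have hpairs : ∀ j ≤ N, ∑ i ∈ range j, μ.real (T^[i] ⁻¹' A ∩ T^[j] ⁻¹' A) ≤ a + N * b := by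
    intro j hj
    calc ∑ i ∈ range j, μ.real (T^[i] ⁻¹' A ∩ T^[j] ⁻¹' A)
        = ∑ i ∈ range j, μ.real (A ∩ T^[j - i] ⁻¹' A) := sum_congr rfl fun i hi ↦
          measureReal_preimage_iterate_inter_preimage_iterate hT hA (mem_range.mp hi).le
      _ = ∑ d ∈ range j, μ.real (A ∩ T^[d + 1] ⁻¹' A) := by
          rw [← sum_range_reflect]
          refine sum_congr rfl fun d hd ↦ ?_
          rw [show j - (j - 1 - d) = d + 1 by have := mem_range.mp hd; omega]
      _ ≤ a + j * b := sum_range_le_add_mul ha hb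
          (fun d hd ↦ hshort (d + 1) (by omega) hd) (fun d hd ↦ hlong (d + 1) (by omega))
      _ ≤ a + N * b := by gcongr
  have hbonf := sum_measureReal_sub_sum_inter_le_measureReal_biUnion μ (fun i ↦ T^[i] ⁻¹' A)
    (fun i ↦ (hT.iterate i).measurable hA) N
  have hsingle : ∑ i ∈ range N, μ.real (T^[i] ⁻¹' A) = N * μ.real A := by
    simp [(hT.iterate _).measureReal_preimage hA.nullMeasurableSet]
  have hdouble : ∑ j ∈ range N, ∑ i ∈ range j, μ.real (T^[i] ⁻¹' A ∩ T^[j] ⁻¹' A)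
      ≤ N * (a + N * b) := by
    simpa only [sum_const, card_range, nsmul_eq_mul] using
      sum_le_sum fun j hj ↦ hpairs j (mem_range.mp hj).le
  linarith

theorem measureReal_biUnion_preimage_iterate_ge_of_mixing (hT : MeasurePreserving T μ μ)
    {𝔅 : ℕ → MeasurableSpace X} (h𝔅le : ∀ n, 𝔅 n ≤ m0) {ψ : ℕ → ℝ} (hψ1 : ∀ n, ψ n ≤ ψ 1)
    (hψ1_nonneg : 0 ≤ ψ 1)
    (hmix : ∀ (n m k : ℕ) (S B : Set X), MeasurableSet[𝔅 n] S → MeasurableSet[𝔅 m] B →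
      |μ.real (S ∩ T^[k + n] ⁻¹' B) - μ.real S * μ.real B| ≤ ψ k * μ.real S * μ.real B)
    {nA : ℕ} (hnA : MeasurableSet[𝔅 nA] A) (hμA : 0 < μ.real A) {ε : ℝ} (hε : 0 ≤ ε)
    (hcorr : (nA : ℝ) * (⨆ i ∈ Icc 1 nA, μ.real (A ∩ T^[i] ⁻¹' A) / μ.real A) < ε)
    {N : ℕ} {δ : ℝ} (hN : N * μ.real A ≤ δ) :
    N * μ.real A * (1 - ε - δ * (1 + ψ 1)) ≤ μ.real (⋃ i ∈ range N, T^[i] ⁻¹' A) := by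
  have hshort : ∀ d, 1 ≤ d → d ≤ nA → nA * μ.real (A ∩ T^[d] ⁻¹' A) ≤ ε * μ.real A := by
    intro d hd1 hd
    have hsup := le_ciSup₂_of_mem (fun i ↦ μ.real (A ∩ T^[i] ⁻¹' A) / μ.real A)
      (mem_Icc.mpr ⟨hd1, hd⟩)
    have := (mul_le_mul_of_nonneg_left hsup nA.cast_nonneg).trans hcorr.le
    rwa [mul_div_assoc', div_le_iff₀ hμA] at this
  have hlong : ∀ d, nA < d → μ.real (A ∩ T^[d] ⁻¹' A) ≤ (1 + ψ 1) * μ.real A ^ 2 := by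
    intro d hd
    have hmixA := measureReal_inter_preimage_iterate_le_of_mixing hmix hnA hnA (d - nA)
    rw [Nat.sub_add_cancel hd.le] at hmixA
    calc _ ≤ (1 + ψ (d - nA)) * (μ.real A * μ.real A) := hmixA
      _ ≤ (1 + ψ 1) * μ.real A ^ 2 := by rw [← sq]; gcongr; exact hψ1 _
  have := measureReal_biUnion_preimage_iterate_ge hT (h𝔅le nA A hnA) (by positivity)
    (by positivity) hshort hlong N
  linarith [mul_le_mul_of_nonneg_left hN (by positivity : (0 : ℝ) ≤ N * μ.real A * (1 + ψ 1))]

end Visits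

section Sweep

variable {X : Type*} [m0 : MeasurableSpace X] {μ : Measure X} [IsFiniteMeasure μ] {T : X → X}
  {A : Set X}

theorem sweep_add_le_of_mixing {𝔅 : ℕ → MeasurableSpace X} (h𝔅le : ∀ n, 𝔅 n ≤ m0)
    (h𝔅mono : Monotone 𝔅)
    (h𝔅T : ∀ n (S : Set X), MeasurableSet[𝔅 n] S → MeasurableSet[𝔅 (n + 1)] (T ⁻¹' S))
    {ψ : ℕ → ℝ}
    (hmix : ∀ (n m k : ℕ) (S B : Set X), MeasurableSet[𝔅 n] S → MeasurableSet[𝔅 m] B →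
      |μ.real (S ∩ T^[k + n] ⁻¹' B) - μ.real S * μ.real B| ≤ ψ k * μ.real S * μ.real B)
    {nA : ℕ} (hnA : MeasurableSet[𝔅 nA] A) (n ℓ N : ℕ) :
    sweep μ T A (n + (nA + ℓ) + N)
      ≤ sweep μ T A n * (1 - μ.real (⋃ i ∈ range N, T^[i] ⁻¹' A) * (1 - ψ ℓ)) := by
  set E := ⋂ i ∈ range n, T^[i] ⁻¹' Aᶜ
  set V := ⋃ i ∈ range N, T^[i] ⁻¹' A
  have hE : MeasurableSet[𝔅 (nA + n)] E :=
    measurableSet_biInter_preimage_iterate_compl_of_filtration h𝔅mono h𝔅T hnA n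
  have hV : MeasurableSet[𝔅 (nA + N)] V :=
    measurableSet_biUnion_preimage_iterate_of_filtration h𝔅mono h𝔅T hnA N
  -- `E` is observed up to time `nA + n`, so the gap `ℓ` puts `V` at time `ℓ + (nA + n)`.
  have hmeet := measureReal_inter_preimage_iterate_ge_of_mixing hmix hE hV ℓ
  have hsub : ⋂ i ∈ range (n + (nA + ℓ) + N), T^[i] ⁻¹' Aᶜ ⊆ E \ T^[ℓ + (nA + n)] ⁻¹' V := by
    intro x hx
    simp only [E, V, Set.mem_sdiff, Set.mem_iInter, Set.mem_iUnion, Set.mem_preimage, mem_range,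
      Set.mem_compl_iff, ← Function.iterate_add_apply] at hx ⊢
    exact ⟨fun i hi ↦ hx i (by omega), fun ⟨i, hi, hiA⟩ ↦ hx _ (by omega) hiA⟩
  have hsplit := measureReal_inter_add_sdiff (μ := μ) (s := E)
    (h𝔅le _ _ (measurableSet_preimage_iterate_of_filtration h𝔅T hV (ℓ + (nA + n))))
  have hsweep : sweep μ T A (n + (nA + ℓ) + N) ≤ μ.real (E \ T^[ℓ + (nA + n)] ⁻¹' V) :=
    measureReal_mono hsub
  change _ ≤ μ.real E * _
  linarith

end Sweep

theorem sweep_zero {X : Type*} [MeasurableSpace X] (μ : Measure X) [IsProbabilityMeasure μ]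
    (T : X → X) (A : Set X) : sweep μ T A 0 = 1 := by
  simp [sweep]

theorem escape_rate_lower_bound_general
    {X : Type*} [m0 : MeasurableSpace X] (μ : Measure X) [IsProbabilityMeasure μ]
    (T : X → X) (hE : Ergodic T μ)
    (𝔅 : ℕ → MeasurableSpace X) (h𝔅le : ∀ n, 𝔅 n ≤ m0) (h𝔅mono : Monotone 𝔅)
    (h𝔅T : ∀ n (S : Set X), MeasurableSet[𝔅 n] S → MeasurableSet[𝔅 (n + 1)] (T ⁻¹' S))
    (ψ : ℕ → ℝ) (hψnonneg : ∀ n, 0 ≤ ψ n)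
    (hψ1 : ∀ n, ψ n ≤ ψ 1)
    (hmix : ∀ (n m k : ℕ) (S B : Set X), MeasurableSet[𝔅 n] S → MeasurableSet[𝔅 m] B →
      |(μ (S ∩ T^[k + n] ⁻¹' B)).toReal - (μ S).toReal * (μ B).toReal| ≤
        ψ k * (μ S).toReal * (μ B).toReal)
    (A : Set X) (hpos : 0 < μ A) (nA : ℕ) (hnA : MeasurableSet[𝔅 nA] A)
    (hs : ∀ k : ℕ, 0 < sweep μ T A k)
    (ε : ℝ) (hε : 0 < ε) (hε1 : ε < 0.1)
    (ℓ : ℕ) (hℓψ : ψ ℓ < ε) (hℓμ : ((nA + ℓ : ℕ) : ℝ) * (μ A).toReal < ε)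
    (hcorr : (nA : ℝ) *
        (⨆ i ∈ Finset.Icc 1 nA, (μ (A ∩ T^[i] ⁻¹' A)).toReal / (μ A).toReal) < ε)
    (ρ : ℝ)
    (hρ : Tendsto (fun j : ℕ => -Real.log (sweep μ T A j) / j) atTop (nhds ρ))
    (k : ℕ) :
    ρ ≥ -Real.log (1 - (k : ℝ) * ((nA + ℓ : ℕ) : ℝ) * (μ A).toReal *
          (1 - ε - (k : ℝ) * ε * (1 + ψ 1)) * (1 - ψ ℓ)) /
        (((k : ℝ) + 1) * ((nA + ℓ : ℕ) : ℝ)) := by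
  rcases (nA + ℓ).eq_zero_or_pos with hr | hr
  · simp only [hr, Nat.cast_zero, mul_zero, div_zero, ge_iff_le]
    exact nonneg_of_tendsto_neg_log_div hs (fun _ ↦ measureReal_le_one) hρ
  have hμA : 0 < μ.real A := ENNReal.toReal_pos hpos.ne' (measure_ne_top μ A)
  set V := ⋃ i ∈ range (k * (nA + ℓ)), T^[i] ⁻¹' A
  have hV : k * ((nA + ℓ : ℕ) : ℝ) * μ.real A * (1 - ε - k * ε * (1 + ψ 1)) ≤ μ.real V := by
    have hN : ((k * (nA + ℓ) : ℕ) : ℝ) * μ.real A ≤ k * ε := by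
      rw [Nat.cast_mul, mul_assoc]
      exact mul_le_mul_of_nonneg_left hℓμ.le k.cast_nonneg
    exact_mod_cast measureReal_biUnion_preimage_iterate_ge_of_mixing hE.toMeasurePreserving h𝔅le
      hψ1 (hψnonneg 1) hmix hnA hμA hε.le hcorr hN
  set q := 1 - μ.real V * (1 - ψ ℓ)
  have hstep : ∀ n, sweep μ T A (n + (k + 1) * (nA + ℓ)) ≤ sweep μ T A n * q := fun n ↦ by
    rw [add_one_mul, add_comm (k * _), ← add_assoc]
    exact sweep_add_le_of_mixing h𝔅le h𝔅mono h𝔅T hmix hnA n ℓ _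
  have hq : 0 ≤ q := by
    simpa [sweep_zero] using ((hs _).trans_le (hstep 0)).le
  have hq_le :
      q ≤ 1 - k * ((nA + ℓ : ℕ) : ℝ) * μ.real A * (1 - ε - k * ε * (1 + ψ 1)) * (1 - ψ ℓ) :=
    sub_le_sub_left (mul_le_mul_of_nonneg_right hV (by linarith)) 1
  have hdecay := fun j ↦ (le_pow_of_add_le_mul hq (sweep_zero μ T A).le hstep j).trans
    (pow_le_pow_left₀ hq hq_le j)
  have := neg_log_div_le_of_tendsto_of_le_pow (by positivity) hs hρ hdecay
  push_cast at this ⊢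
  exact this

theorem escape_rate_lower_bound
    {X : Type*} [m0 : MeasurableSpace X] (μ : Measure X) [IsProbabilityMeasure μ]
    (T : X → X) (hE : Ergodic T μ)
    (𝔅 : ℕ → MeasurableSpace X) (h𝔅le : ∀ n, 𝔅 n ≤ m0) (h𝔅mono : Monotone 𝔅)
    (h𝔅T : ∀ n (S : Set X), MeasurableSet[𝔅 n] S → MeasurableSet[𝔅 (n + 1)] (T ⁻¹' S))
    (ψ : ℕ → ℝ) (hψnonneg : ∀ n, 0 ≤ ψ n) (hψ0 : Tendsto ψ atTop (nhds 0))
    (hψ1 : ∀ n, ψ n ≤ ψ 1)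
    (hmix : ∀ (n m k : ℕ) (S B : Set X), MeasurableSet[𝔅 n] S → MeasurableSet[𝔅 m] B →
      |(μ (S ∩ T^[k + n] ⁻¹' B)).toReal - (μ S).toReal * (μ B).toReal| ≤
        ψ k * (μ S).toReal * (μ B).toReal)
    (A : Set X) (hpos : 0 < μ A) (nA : ℕ) (hnA : MeasurableSet[𝔅 nA] A)
    (hnAmin : ∀ m, MeasurableSet[𝔅 m] A → nA ≤ m)
    (hs : ∀ k : ℕ, 0 < sweep μ T A k)
    (ε : ℝ) (hε : 0 < ε) (hε1 : ε < 0.1)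
    (ℓ : ℕ) (hℓψ : ψ ℓ < ε) (hℓμ : ((nA + ℓ : ℕ) : ℝ) * (μ A).toReal < ε)
    (hcorr : (nA : ℝ) *
        (⨆ i ∈ Finset.Icc 1 nA, (μ (A ∩ T^[i] ⁻¹' A)).toReal / (μ A).toReal) < ε)
    (ρ : ℝ)
    (hρ : Tendsto (fun j : ℕ => -Real.log (sweep μ T A j) / j) atTop (nhds ρ))
    (k : ℕ) (hk1 : 1 ≤ k) (hkε : (k : ℝ) < 1 / ε) :
    ρ ≥ -Real.log (1 - (k : ℝ) * ((nA + ℓ : ℕ) : ℝ) * (μ A).toReal *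
          (1 - ε - (k : ℝ) * ε * (1 + ψ 1)) * (1 - ψ ℓ)) /
        (((k : ℝ) + 1) * ((nA + ℓ : ℕ) : ℝ)) :=
  escape_rate_lower_bound_general (m0 := m0) μ T hE 𝔅 h𝔅le h𝔅mono h𝔅T ψ hψnonneg hψ1 hmix A hpos nA
    hnA hs ε hε hε1 ℓ hℓψ hℓμ hcorr ρ hρ k
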